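/- arXiv:1601.05799 — 5 statements merged into one kernel-verified Lean document; each statement's English description precedes it below -/
import Mathlib

section
/- Let S and S' be finite index sets, W a finite set of work values, and β > 0. Suppose P(s',w|s) is a conditional probability distribution (nonnegative, with ∑_{s',w} P(s',w|s) = 1 for each s) satisfying the Gibbs-stochastic condition ∑_{s,w} P(s',w|s)·exp(β(E_{s'} − E_s + w)) = 1 for all s'. Then for any initial probability distribution P(s) on S with P(s) > 0 for all s, defining f_s = E_s + (1/β)·ln P(s) and f_{s'} = E_{s'} + (1/β)·ln P(s') where P(s') = ∑_{s,w} P(s',w|s)·P(s) (assumed positive), one has the second law equality: ∑_{s,s',w} P(s)·P(s',w|s)·exp(β(f_{s'} − f_s + w)) = 1. -/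
open Real Finset

/-!
Writing `f = E + β⁻¹ log p`, the exponential weight factors as
`exp (β (f' s' - f s + w)) = (q s' / p s) · exp (β (E' s' - E s + w))`.
The `p s` cancels against the initial distribution, the Gibbs-stochastic condition
collapses the remaining sum over `s, w` to `1`, and what is left is `∑ q = ∑ p = 1`,
since the kernel conserves probability.
-/

lemma exp_mul_sub_add_one_div_mul_log {β : ℝ} (hβ : β ≠ 0) {x y : ℝ} (hx : 0 < x) (hy : 0 < y)
    (a b w : ℝ) :
    exp (β * ((b + 1 / β * log y) - (a + 1 / β * log x) + w))
      = y / x * exp (β * (b - a + w)) := by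
  have harg : β * ((b + 1 / β * log y) - (a + 1 / β * log x) + w)
      = β * (b - a + w) + (log y - log x) := by
    field_simp
    ring
  rw [harg, exp_add, exp_sub, exp_log hx, exp_log hy, mul_comm]

lemma sum_sum_sum_mul_eq_sum_of_sum_sum_eq_one {ι κ τ : Type*} [Fintype ι] [Fintype κ]
    [Fintype τ] (K : κ → τ → ι → ℝ) (hK : ∀ i, ∑ k, ∑ t, K k t i = 1) (p : ι → ℝ) :
    ∑ k, ∑ i, ∑ t, K k t i * p i = ∑ i, p i := by
  calc ∑ k, ∑ i, ∑ t, K k t i * p i = ∑ i, (∑ k, ∑ t, K k t i) * p i := by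
        rw [sum_comm]
        simp only [sum_mul]
    _ = ∑ i, p i := by simp only [hK, one_mul]

theorem second_law_equality_general
    {S S' W : Type*} [Fintype S] [Fintype S'] [Fintype W]
    (E : S → ℝ) (E' : S' → ℝ) (wv : W → ℝ) (β : ℝ) (hβ : 0 < β)
    (P : S' → W → S → ℝ)
    (hPnorm : ∀ s, ∑ s', ∑ w, P s' w s = 1)
    (hGibbs : ∀ s', ∑ s, ∑ w, P s' w s * Real.exp (β * (E' s' - E s + wv w)) = 1)
    (p : S → ℝ) (hp : ∀ s, 0 < p s) (hpnorm : ∑ s, p s = 1)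
    (q : S' → ℝ) (hq : ∀ s', q s' = ∑ s, ∑ w, P s' w s * p s)
    (hqpos : ∀ s', 0 < q s')
    (f : S → ℝ) (hf : ∀ s, f s = E s + (1 / β) * Real.log (p s))
    (f' : S' → ℝ) (hf' : ∀ s', f' s' = E' s' + (1 / β) * Real.log (q s')) :
    ∑ s, ∑ s', ∑ w,
      p s * P s' w s * Real.exp (β * (f' s' - f s + wv w)) = 1 := by
  have hweight : ∀ s s' w, p s * P s' w s * exp (β * (f' s' - f s + wv w))
      = q s' * (P s' w s * exp (β * (E' s' - E s + wv w))) := fun s s' w => by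
    rw [hf, hf', exp_mul_sub_add_one_div_mul_log hβ.ne' (hp s) (hqpos s')]
    field_simp [(hp s).ne']
  calc ∑ s, ∑ s', ∑ w, p s * P s' w s * exp (β * (f' s' - f s + wv w))
      = ∑ s', q s' * ∑ s, ∑ w, P s' w s * exp (β * (E' s' - E s + wv w)) := by
        rw [sum_comm]
        simp only [hweight, mul_sum]
    _ = ∑ s', q s' := by simp only [hGibbs, mul_one]
    _ = ∑ s, p s := by
        simp only [hq]
        exact sum_sum_sum_mul_eq_sum_of_sum_sum_eq_one P hPnorm p
    _ = 1 := hpnorm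

/-- Classical Second Law Equality: under the fluctuating-work Gibbs-stochastic
condition, for any positive initial distribution the expectation of
`exp (β (f_{s'} - f_s + w))` equals 1, where `f_s = E_s + β⁻¹ log P(s)`. -/
theorem second_law_equality
    {S S' W : Type*} [Fintype S] [Fintype S'] [Fintype W]
    (E : S → ℝ) (E' : S' → ℝ) (wv : W → ℝ) (β : ℝ) (hβ : 0 < β)
    (P : S' → W → S → ℝ)
    (hPnn : ∀ s' w s, 0 ≤ P s' w s)
    (hPnorm : ∀ s, ∑ s', ∑ w, P s' w s = 1)
    (hGibbs : ∀ s', ∑ s, ∑ w, P s' w s * Real.exp (β * (E' s' - E s + wv w)) = 1)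
    (p : S → ℝ) (hp : ∀ s, 0 < p s) (hpnorm : ∑ s, p s = 1)
    (q : S' → ℝ) (hq : ∀ s', q s' = ∑ s, ∑ w, P s' w s * p s)
    (hqpos : ∀ s', 0 < q s')
    (f : S → ℝ) (hf : ∀ s, f s = E s + (1 / β) * Real.log (p s))
    (f' : S' → ℝ) (hf' : ∀ s', f' s' = E' s' + (1 / β) * Real.log (q s')) :
    ∑ s, ∑ s', ∑ w,
      p s * P s' w s * Real.exp (β * (f' s' - f s + wv w)) = 1 :=
  second_law_equality_general E E' wv β hβ P hPnorm hGibbs p hp hpnorm q hq hqpos f hf f' hf'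
end

section
/- Let P(s',w|s) be a conditional probability distribution over a finite set satisfying the Gibbs-stochastic condition ∑_{s,w} P(s',w|s)·exp(β(E_{s'} − E_s + w)) = 1 for all s'. Then for any initial distribution P(s) with P(s) > 0 for all s, defining f_s = E_s + (1/β)·ln P(s), one has the generalized Jarzynski equality: ∑_{s,s',w} P(s)·P(s',w|s)·exp(β(w − f_s)) = Z'_S, where Z'_S = ∑_{s'} exp(−β·E_{s'}). -/
open Real Finset

/-! Weighting by `p s` cancels the `log (p s)` in `f s`, so the average equals the unweighted sum
`∑ s, ∑ s', ∑ w, P(s', w | s) exp (β (w - E s))`. Summed over `s` and `w` first, the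
Gibbs-stochastic condition turns this into `exp (-β E' s')` for each final state `s'`. -/

lemma mul_exp_sub_log {p : ℝ} (hp : 0 < p) (a : ℝ) : p * exp (a - log p) = exp a := by
  rw [exp_sub, exp_log hp, mul_div_cancel₀ _ hp.ne']

lemma mul_exp_sub_free_energy {β p : ℝ} (hβ : β ≠ 0) (hp : 0 < p) (E w : ℝ) :
    p * exp (β * (w - (E + 1 / β * log p))) = exp (β * (w - E)) := by
  have hexponent : β * (w - (E + 1 / β * log p)) = β * (w - E) - log p := by
    field_simp
    ring
  rw [hexponent, mul_exp_sub_log hp]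

lemma sum_mul_exp_work_sub_energy_of_gibbs_stochastic {S S' W : Type*} [Fintype S] [Fintype W]
    (E : S → ℝ) (E' : S' → ℝ) (wv : W → ℝ) (β : ℝ) (P : S' → W → S → ℝ) (s' : S')
    (hGibbs : ∑ s, ∑ w, P s' w s * exp (β * (E' s' - E s + wv w)) = 1) :
    ∑ s, ∑ w, P s' w s * exp (β * (wv w - E s)) = exp (-β * E' s') := by
  have hsplit : ∀ s w, exp (β * (wv w - E s)) =
      exp (-β * E' s') * exp (β * (E' s' - E s + wv w)) := fun s w => by
    rw [← exp_add]
    ring_nf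
  simp only [hsplit, mul_left_comm (P s' _ _), ← mul_sum, hGibbs, mul_one]

theorem generalized_jarzynski_general
    {S S' W : Type*} [Fintype S] [Fintype S'] [Fintype W]
    (E : S → ℝ) (E' : S' → ℝ) (wv : W → ℝ) (β : ℝ) (hβ : 0 < β)
    (P : S' → W → S → ℝ)
    (hGibbs : ∀ s', ∑ s, ∑ w, P s' w s * Real.exp (β * (E' s' - E s + wv w)) = 1)
    (p : S → ℝ) (hp : ∀ s, 0 < p s)
    (f : S → ℝ) (hf : ∀ s, f s = E s + (1 / β) * Real.log (p s)) :
    ∑ s, ∑ s', ∑ w,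
      p s * P s' w s * Real.exp (β * (wv w - f s)) =
      ∑ s', Real.exp (-β * E' s') := by
  have hweight : ∀ s s' w, p s * P s' w s * exp (β * (wv w - f s)) =
      P s' w s * exp (β * (wv w - E s)) := fun s s' w => by
    rw [mul_right_comm, hf, mul_exp_sub_free_energy hβ.ne' (hp s), mul_comm]
  simp only [hweight]
  rw [sum_comm]
  exact sum_congr rfl fun s' _ =>
    sum_mul_exp_work_sub_energy_of_gibbs_stochastic E E' wv β P s' (hGibbs s')

/-- Generalized Jarzynski equality for arbitrary initial states:
`⟨exp (β (w - f_s))⟩ = Z'_S`. -/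
theorem generalized_jarzynski
    {S S' W : Type*} [Fintype S] [Fintype S'] [Fintype W]
    (E : S → ℝ) (E' : S' → ℝ) (wv : W → ℝ) (β : ℝ) (hβ : 0 < β)
    (P : S' → W → S → ℝ)
    (hPnn : ∀ s' w s, 0 ≤ P s' w s)
    (hPnorm : ∀ s, ∑ s', ∑ w, P s' w s = 1)
    (hGibbs : ∀ s', ∑ s, ∑ w, P s' w s * Real.exp (β * (E' s' - E s + wv w)) = 1)
    (p : S → ℝ) (hp : ∀ s, 0 < p s) (hpnorm : ∑ s, p s = 1)
    (f : S → ℝ) (hf : ∀ s, f s = E s + (1 / β) * Real.log (p s)) :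
    ∑ s, ∑ s', ∑ w,
      p s * P s' w s * Real.exp (β * (wv w - f s)) =
      ∑ s', Real.exp (-β * E' s') :=
  generalized_jarzynski_general E E' wv β hβ P hGibbs p hp f hf
end

section
/- If P(s',w|s) is a conditional probability distribution over finite sets satisfying ∑_{s,w} P(s',w|s)·exp(β(E_{s'} − E_s + w)) = 1 for all s', and the initial state is thermal, i.e. P(s) = exp(−β·E_s)/Z_S with Z_S = ∑_s exp(−β·E_s), then the standard Jarzynski equality holds: ∑_{s,s',w} P(s)·P(s',w|s)·exp(β·w) = Z'_S / Z_S, where Z'_S = ∑_{s'} exp(−β·E_{s'}). -/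
/-!
Multiplying by the thermal weight `exp (-β E s)` turns `exp (β w)` into
`exp (-β E' s') * exp (β (E' s' - E s + w))`. After exchanging the order of summation, the
inner sum over `s` and `w` is exactly the Gibbs-preservation condition, which equals `1`.
-/

open Real Finset

lemma exp_neg_mul_mul_exp_mul_eq (β e e' w : ℝ) :
    exp (-β * e) * exp (β * w) = exp (-β * e') * exp (β * (e' - e + w)) := by
  rw [← exp_add, ← exp_add]
  ring_nf

lemma sum_thermal_mul_exp_work_eq {S S' W : Type*} [Fintype S] [Fintype S'] [Fintype W]
    (E : S → ℝ) (E' : S' → ℝ) (wv : W → ℝ) (β : ℝ) (P : S' → W → S → ℝ) :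
    ∑ s, ∑ s', ∑ w, exp (-β * E s) * P s' w s * exp (β * wv w) =
      ∑ s', exp (-β * E' s') * ∑ s, ∑ w, P s' w s * exp (β * (E' s' - E s + wv w)) := by
  rw [sum_comm]
  refine sum_congr rfl fun s' _ => ?_
  simp only [mul_sum]
  refine sum_congr rfl fun s _ => sum_congr rfl fun w _ => ?_
  rw [mul_right_comm, exp_neg_mul_mul_exp_mul_eq β (E s) (E' s') (wv w)]
  ring

theorem standard_jarzynski_general
    {S S' W : Type*} [Fintype S] [Fintype S'] [Fintype W]
    (E : S → ℝ) (E' : S' → ℝ) (wv : W → ℝ) (β : ℝ)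
    (P : S' → W → S → ℝ)
    (hGibbs : ∀ s', ∑ s, ∑ w, P s' w s * Real.exp (β * (E' s' - E s + wv w)) = 1)
    (Z : ℝ)
    (p : S → ℝ) (hp : ∀ s, p s = Real.exp (-β * E s) / Z) :
    ∑ s, ∑ s', ∑ w, p s * P s' w s * Real.exp (β * wv w) =
      (∑ s', Real.exp (-β * E' s')) / Z := by
  calc ∑ s, ∑ s', ∑ w, p s * P s' w s * exp (β * wv w)
      = (∑ s, ∑ s', ∑ w, exp (-β * E s) * P s' w s * exp (β * wv w)) / Z := by
        simp only [hp, sum_div, div_mul_eq_mul_div]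
    _ = (∑ s', exp (-β * E' s')) / Z := by
        rw [sum_thermal_mul_exp_work_eq E E']
        simp only [hGibbs, mul_one]

/-- Standard Jarzynski equality for an initially thermal state:
`⟨exp (β w)⟩ = Z'_S / Z_S`. -/
theorem standard_jarzynski
    {S S' W : Type*} [Fintype S] [Fintype S'] [Fintype W]
    (E : S → ℝ) (E' : S' → ℝ) (wv : W → ℝ) (β : ℝ) (hβ : 0 < β)
    (P : S' → W → S → ℝ)
    (hPnn : ∀ s' w s, 0 ≤ P s' w s)
    (hPnorm : ∀ s, ∑ s', ∑ w, P s' w s = 1)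
    (hGibbs : ∀ s', ∑ s, ∑ w, P s' w s * Real.exp (β * (E' s' - E s + wv w)) = 1)
    (Z : ℝ) (hZ : Z = ∑ s, Real.exp (-β * E s))
    (p : S → ℝ) (hp : ∀ s, p s = Real.exp (-β * E s) / Z) :
    ∑ s, ∑ s', ∑ w, p s * P s' w s * Real.exp (β * wv w) =
      (∑ s', Real.exp (-β * E' s')) / Z :=
  standard_jarzynski_general E E' wv β P hGibbs Z p hp
end

section
/- Let X be a real random variable on a finite probability space with E[exp(β·X)] = 1 for some β > 0. Then for every odd natural number N, ∑_{k=1}^{N} (β^k / k!)·E[X^k] ≤ 0. -/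
/-!
Averaging the Taylor expansion of `exp` at `β X` turns the sum into
`E[T_N(β X)] - 1`, where `T_N` is the Taylor polynomial of degree `N`. Since `N + 1` is even, the
Lagrange remainder `exp ξ · x ^ (N + 1) / (N + 1)!` is nonnegative, so `T_N ≤ exp` on all of `ℝ`,
and the sum is at most `E[exp (β X)] - 1 = 0`.
-/

open Real Finset
open scoped Nat

theorem Finset.sum_Icc_one_eq_sum_range_sub {M : Type*} [AddCommGroup M] (f : ℕ → M) (N : ℕ) :
    ∑ k ∈ Icc 1 N, f k = ∑ k ∈ range (N + 1), f k - f 0 := by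
  rw [sum_range_succ', ← Ico_add_one_right_eq_Icc, sum_Ico_eq_sum_range]
  simp [add_comm]

theorem Real.taylorWithinEval_exp (n : ℕ) {s : Set ℝ} (hs : UniqueDiffOn ℝ s) {x₀ : ℝ}
    (hx₀ : x₀ ∈ s) (x : ℝ) :
    taylorWithinEval exp n s x₀ x = ∑ k ∈ range (n + 1), (x - x₀) ^ k / k ! * exp x₀ := by
  rw [taylor_within_apply]
  refine sum_congr rfl fun k _ => ?_
  rw [iteratedDerivWithin_eq_iteratedDeriv hs contDiff_exp.contDiffAt hx₀,
    iteratedDeriv_eq_iterate, iter_deriv_exp, smul_eq_mul, div_eq_inv_mul]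

theorem Real.sum_range_pow_div_factorial_le_exp_of_odd {N : ℕ} (hN : Odd N) (x : ℝ) :
    ∑ k ∈ range (N + 1), x ^ k / k ! ≤ exp x := by
  rcases le_or_gt 0 x with hx | hx
  · exact sum_le_exp_of_nonneg hx _
  obtain ⟨ξ, -, hξ⟩ := taylor_mean_remainder_lagrange_iteratedDeriv hx.ne' (f := exp) (n := N)
    contDiff_exp.contDiffOn
  simp only [taylorWithinEval_exp N (uniqueDiffOn_uIcc hx.ne') Set.left_mem_uIcc, sub_zero,
    exp_zero, mul_one, iteratedDeriv_eq_iterate, iter_deriv_exp] at hξ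
  have : 0 ≤ exp ξ * x ^ (N + 1) / (N + 1)! := by
    have := hN.add_one.pow_nonneg x
    positivity
  linarith

theorem second_law_hierarchy_general
    {Ω : Type*} [Fintype Ω]
    (p : Ω → ℝ) (hpnn : ∀ ω, 0 ≤ p ω) (hpnorm : ∑ ω, p ω = 1)
    (X : Ω → ℝ) (β : ℝ)
    (h : ∑ ω, p ω * Real.exp (β * X ω) = 1)
    (N : ℕ) (hN : Odd N) :
    ∑ k ∈ Finset.Icc 1 N,
      (β ^ k / (Nat.factorial k : ℝ)) * ∑ ω, p ω * (X ω) ^ k ≤ 0 := by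
  calc ∑ k ∈ Icc 1 N, (β ^ k / (k ! : ℝ)) * ∑ ω, p ω * X ω ^ k
      = ∑ ω, p ω * ∑ k ∈ Icc 1 N, (β * X ω) ^ k / (k ! : ℝ) := by
        simp_rw [mul_sum]
        rw [sum_comm]
        refine sum_congr rfl fun ω _ => sum_congr rfl fun k _ => ?_
        ring
    _ ≤ ∑ ω, p ω * (exp (β * X ω) - 1) := by
        gcongr with ω
        · exact hpnn ω
        · rw [sum_Icc_one_eq_sum_range_sub]
          simpa using sum_range_pow_div_factorial_le_exp_of_odd hN (β * X ω)
    _ = 0 := by simp [mul_sub, sum_sub_distrib, h, hpnorm]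

/-- Hierarchy of second-law inequalities: if `E[exp (β X)] = 1` with `β > 0`,
then for every odd `N`, `∑_{k=1}^N (β^k / k!) E[X^k] ≤ 0`. -/
theorem second_law_hierarchy
    {Ω : Type*} [Fintype Ω]
    (p : Ω → ℝ) (hpnn : ∀ ω, 0 ≤ p ω) (hpnorm : ∑ ω, p ω = 1)
    (X : Ω → ℝ) (β : ℝ) (hβ : 0 < β)
    (h : ∑ ω, p ω * Real.exp (β * X ω) = 1)
    (N : ℕ) (hN : Odd N) :
    ∑ k ∈ Finset.Icc 1 N,
      (β ^ k / (Nat.factorial k : ℝ)) * ∑ ω, p ω * (X ω) ^ k ≤ 0 :=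
  second_law_hierarchy_general p hpnn hpnorm X β h N hN
end

section
/- Under the Gibbs-stochastic condition ∑_{s,w} P(s',w|s)·exp(β(E_{s'} − E_s + w)) = 1 for all s', define forward probabilities p_fwd(w,s',s) = P(s',w|s)·exp(−β·E_s)/Z_S and backward probabilities p_back(−w,s,s') = P_back(s,−w|s')·exp(−β·E_{s'})/Z'_S where P_back(s,−w|s') = P(s',w|s)·exp(β(E_{s'} − E_s + w)), Z_S = ∑_s exp(−β·E_s), Z'_S = ∑_{s'} exp(−β·E_{s'}). Then the detailed Crooks relation holds: p_fwd(w,s',s) / p_back(−w,s,s') = exp(−β·w)·Z'_S/Z_S whenever p_back(−w,s,s') ≠ 0. -/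
open Real Finset

/-- Detailed Crooks relation:
`p_fwd(w,s',s) / p_back(−w,s,s') = exp(−βw) · Z'_S / Z_S`. -/
theorem detailed_crooks
    {S S' W : Type*} [Fintype S] [Fintype S'] [Fintype W]
    (E : S → ℝ) (E' : S' → ℝ) (wv : W → ℝ) (β : ℝ) (hβ : 0 < β)
    (P : S' → W → S → ℝ)
    (hPnn : ∀ s' w s, 0 ≤ P s' w s)
    (hPnorm : ∀ s, ∑ s', ∑ w, P s' w s = 1)
    (hGibbs : ∀ s', ∑ s, ∑ w, P s' w s * Real.exp (β * (E' s' - E s + wv w)) = 1)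
    (Z Z' : ℝ)
    (hZ : Z = ∑ s, Real.exp (-β * E s))
    (hZ' : Z' = ∑ s', Real.exp (-β * E' s'))
    (pfwd pback : W → S' → S → ℝ)
    (hfwd : ∀ w s' s, pfwd w s' s = P s' w s * Real.exp (-β * E s) / Z)
    (hback : ∀ w s' s, pback w s' s =
      (P s' w s * Real.exp (β * (E' s' - E s + wv w))) *
        Real.exp (-β * E' s') / Z')
    (w : W) (s' : S') (s : S) (hne : pback w s' s ≠ 0) :
    pfwd w s' s / pback w s' s = Real.exp (-β * wv w) * Z' / Z := by
  have hZpos : 0 < Z := by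
    rw [hZ]; exact Finset.sum_pos (fun i _ => Real.exp_pos _) ⟨s, Finset.mem_univ s⟩
  have hZne : Z ≠ 0 := ne_of_gt hZpos
  rw [hback] at hne
  have hZ'ne : Z' ≠ 0 := by intro h; rw [h, div_zero] at hne; exact hne rfl
  have hPne : P s' w s ≠ 0 := by
    intro h; rw [h, zero_mul, zero_mul, zero_div] at hne; exact hne rfl
  rw [hfwd, hback, div_div_div_comm, mul_assoc, ← Real.exp_add,
    show β * (E' s' - E s + wv w) + -β * E' s' = -β * E s + β * wv w by ring,
    Real.exp_add]
  rw [show P s' w s * (Real.exp (-β * E s) * Real.exp (β * wv w))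
      = (P s' w s * Real.exp (-β * E s)) * Real.exp (β * wv w) by ring]
  have h1 : P s' w s * Real.exp (-β * E s) ≠ 0 :=
    mul_ne_zero hPne (Real.exp_ne_zero _)
  rw [div_mul_eq_div_div, div_self h1]
  rw [one_div, ← Real.exp_neg]
  rw [show -(β * wv w) = -β * wv w by ring]
  field_simp
end
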